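/- arXiv:1010.0280 — 5 statements merged into one kernel-verified Lean document; each statement's English description precedes it below -/
import Mathlib

section
/- In a c-splitting authentication code with source state set S, message set M, and encoding rule set E, the probability P_{d_i} that an opponent succeeds in a spoofing attack of order i satisfies P_{d_i} ≥ c·(|S|−i)/(|M|−i) for every i ≥ 0. -/
/-!
Given the observed set `T` of `i` messages, inserting `m` succeeds with probability `H(T, m)`,
the weight of the outcomes under which `m` is authentic but not observed. Summed over all
`(T, m)`, every possible outcome is counted once for each of its new authentic messages, of
which there are at least `c|S| - i` because the `c`-subsets `e g s` are disjoint. Given `T` only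
the `|M| - i` messages outside `T` can succeed, so answering each `T` with a maximiser of
`H(T, ·)` gains at least `(c|S| - i) / (|M| - i) ≥ c (|S| - i) / (|M| - i)`.
-/

open Finset

section OptimalResponse

variable {Ω O M : Type*} [Fintype Ω] [Fintype O] [Fintype M] [DecidableEq O] [DecidableEq M]

theorem exists_response_sum_mul_card_le [Nonempty M] (w : Ω → ℝ) (hw : ∀ ω, 0 ≤ w ω)
    (obs : Ω → O) (A : Ω → Finset M) (B : O → Finset M) (k : ℕ)
    (hB : ∀ T, (B T).card ≤ k) (hA : ∀ ω, A ω ⊆ B (obs ω)) :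
    ∃ o : O → M, ∑ ω, w ω * (A ω).card ≤ k * ∑ ω, if o (obs ω) ∈ A ω then w ω else 0 := by
  set h : O → M → ℝ := fun T m => ∑ ω with obs ω = T, if m ∈ A ω then w ω else 0
  choose o ho using fun T => Finite.exists_max (h T)
  refine ⟨o, ?_⟩
  have h_nonneg : ∀ T m, 0 ≤ h T m := fun T m =>
    sum_nonneg fun ω _ => by split_ifs <;> simp [hw]
  have h_eq_zero : ∀ T, ∀ m ∉ B T, h T m = 0 := by
    refine fun T m hm => sum_eq_zero fun ω hω => if_neg fun hmA => hm ?_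
    exact (mem_filter.mp hω).2 ▸ hA ω hmA
  have sum_le : ∀ T, ∑ m, h T m ≤ k * h T (o T) := fun T =>
    calc ∑ m, h T m = ∑ m ∈ B T, h T m :=
          (sum_subset (subset_univ _) fun m _ hm => h_eq_zero T m hm).symm
      _ ≤ (B T).card * h T (o T) := by
          simpa using sum_le_card_nsmul _ _ _ fun m _ => ho T m
      _ ≤ k * h T (o T) := by gcongr; exacts [h_nonneg _ _, hB T]
  calc ∑ ω, w ω * (A ω).card = ∑ T, ∑ m, h T m := by
        simp only [h]
        rw [← sum_fiberwise univ obs fun ω => w ω * (A ω).card]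
        refine sum_congr rfl fun T _ => ?_
        rw [sum_comm]
        refine sum_congr rfl fun ω _ => ?_
        rw [sum_ite_mem, univ_inter, sum_const, nsmul_eq_mul, mul_comm]
    _ ≤ ∑ T, k * h T (o T) := sum_le_sum fun T _ => sum_le T
    _ = k * ∑ ω, if o (obs ω) ∈ A ω then w ω else 0 := by
        rw [← mul_sum, ← sum_fiberwise univ obs]
        refine congrArg _ (sum_congr rfl fun T _ => sum_congr rfl fun ω hω => ?_)
        rw [(mem_filter.mp hω).2]

end OptimalResponse

theorem sum_pi_prod_eq_one {ι M : Type*} [Fintype ι] [DecidableEq ι] [Fintype M]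
    (p : ι → M → ℝ) (hp : ∀ j, ∑ m, p j m = 1) : ∑ τ : ι → M, ∏ j, p j (τ j) = 1 := by
  rw [← Fintype.prod_sum]
  simp [hp]

section SplittingCode

variable {S M E : Type*} [DecidableEq M] {e : E → S → Finset M} {i : ℕ}

theorem card_biUnion_of_splitting [Fintype S] {c : ℕ} (hcard : ∀ g s, (e g s).card = c)
    (hdisj : ∀ g, ∀ s s' : S, s ≠ s' → Disjoint (e g s) (e g s')) (g : E) :
    (univ.biUnion (e g)).card = c * Fintype.card S := by
  rw [card_biUnion fun s _ s' _ hss' => hdisj g s s' hss']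
  simp [hcard, mul_comm]

theorem card_image_of_encodes (hdisj : ∀ g, ∀ s s' : S, s ≠ s' → Disjoint (e g s) (e g s'))
    {g : E} {σ : Fin i ↪ S} {τ : Fin i → M} (hτ : ∀ j, τ j ∈ e g (σ j)) :
    (univ.image τ).card = i := by
  refine (card_image_of_injective _ fun j k hjk => ?_).trans (card_fin i)
  by_contra hne
  exact disjoint_left.mp (hdisj g _ _ (σ.injective.ne hne)) (hτ j) (hjk ▸ hτ k)

def newAuthentic [Fintype S] (e : E → S → Finset M) (g : E) (σ : Fin i ↪ S) (τ : Fin i → M) :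
    Finset M :=
  if ∀ j, τ j ∈ e g (σ j) then univ.biUnion (e g) \ univ.image τ else ∅

theorem mem_newAuthentic [Fintype S] {g : E} {σ : Fin i ↪ S} {τ : Fin i → M} {m : M} :
    m ∈ newAuthentic e g σ τ ↔
      (∀ j, τ j ∈ e g (σ j)) ∧ m ∉ univ.image τ ∧ ∃ s, m ∈ e g s := by
  unfold newAuthentic
  split_ifs with hτ <;> simp [hτ, and_comm]

theorem newAuthentic_subset_compl [Fintype S] [Fintype M] (hdisj : ∀ g, ∀ s s' : S, s ≠ s' → Disjoint (e g s) (e g s'))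
    (g : E) (σ : Fin i ↪ S) (τ : Fin i → M) :
    newAuthentic e g σ τ ⊆ if (univ.image τ).card = i then (univ.image τ)ᶜ else ∅ := by
  unfold newAuthentic
  split_ifs with hτ hcard
  · exact fun m hm => mem_compl.mpr (mem_sdiff.mp hm).2
  · exact absurd (card_image_of_encodes hdisj hτ) hcard
  all_goals exact empty_subset _

theorem sub_le_sum_mul_card_newAuthentic [Fintype S] [DecidableEq S] [Fintype M] [Fintype E]
    {c : ℕ} (hcard : ∀ g s, (e g s).card = c)
    (hdisj : ∀ g, ∀ s s' : S, s ≠ s' → Disjoint (e g s) (e g s'))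
    (pE : E → ℝ) (hpE : ∀ g, 0 ≤ pE g) (hpEsum : ∑ g, pE g = 1)
    (pS : (Fin i ↪ S) → ℝ) (hpS : ∀ σ, 0 ≤ pS σ) (hpSsum : ∑ σ, pS σ = 1)
    (sp : E → S → M → ℝ) (hsp : ∀ g s m, 0 ≤ sp g s m)
    (hsupp : ∀ g s m, sp g s m ≠ 0 → m ∈ e g s)
    (hspsum : ∀ g s, ∑ m, sp g s m = 1) :
    (c * Fintype.card S - i : ℝ) ≤ ∑ g, ∑ σ : Fin i ↪ S, ∑ τ : Fin i → M,
      pE g * pS σ * (∏ j, sp g (σ j) (τ j)) * (newAuthentic e g σ τ).card := by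
  have total : ∑ g, ∑ σ : Fin i ↪ S, ∑ τ : Fin i → M, pE g * pS σ * ∏ j, sp g (σ j) (τ j) = 1 := by
    simp only [← mul_sum, fun g (σ : Fin i ↪ S) =>
      sum_pi_prod_eq_one (fun j => sp g (σ j)) fun j => hspsum _ _, mul_one, hpSsum, hpEsum]
  have le_card : ∀ g σ τ, (c * Fintype.card S - i : ℝ) * (pE g * pS σ * ∏ j, sp g (σ j) (τ j)) ≤
      pE g * pS σ * (∏ j, sp g (σ j) (τ j)) * (newAuthentic e g σ τ).card := by
    intro g σ τ
    by_cases hτ : ∀ j, τ j ∈ e g (σ j)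
    · have hU := card_le_card_sdiff_add_card (s := univ.biUnion (e g)) (t := univ.image τ)
      rw [card_biUnion_of_splitting hcard hdisj, card_image_of_encodes hdisj hτ] at hU
      have : (c * Fintype.card S - i : ℝ) ≤ (newAuthentic e g σ τ).card := by
        rw [newAuthentic, if_pos hτ, sub_le_iff_le_add]
        exact_mod_cast hU
      rw [mul_comm]
      exact mul_le_mul_of_nonneg_left this
        (mul_nonneg (mul_nonneg (hpE g) (hpS σ)) (prod_nonneg fun j _ => hsp _ _ _))
    · push Not at hτ
      obtain ⟨j, hj⟩ := hτ
      rw [prod_eq_zero (mem_univ j) (not_imp_comm.mp (hsupp g _ _) hj)]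
      simp
  calc (c * Fintype.card S - i : ℝ)
      = (c * Fintype.card S - i : ℝ) *
          ∑ g, ∑ σ : Fin i ↪ S, ∑ τ : Fin i → M, pE g * pS σ * ∏ j, sp g (σ j) (τ j) := by
        rw [total, mul_one]
    _ = ∑ g, ∑ σ : Fin i ↪ S, ∑ τ : Fin i → M,
          (c * Fintype.card S - i : ℝ) * (pE g * pS σ * ∏ j, sp g (σ j) (τ j)) := by
        simp only [mul_sum]
    _ ≤ _ := sum_le_sum fun g _ => sum_le_sum fun σ _ => sum_le_sum fun τ _ => le_card g σ τ

end SplittingCode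

/-- **Huber's lower bound on the spoofing probability.**
In a `c`-splitting authentication code `(S, M, E)` — each encoding rule `g : E`
assigns to each source state `s` a `c`-subset `e g s` of messages, pairwise
disjoint over source states — the probability `P_{d_i}` of deception by a
spoofing attack of order `i` satisfies `P_{d_i} ≥ c (|S| - i) / (|M| - i)`.

Here the transmitter/receiver use an encoding strategy `pE` (a distribution on
encoding rules), the `i` observed messages encode `i` distinct source states
drawn per a distribution `pS` on injections `Fin i ↪ S`, and for each rule and
source state the message is drawn per the splitting strategy `sp` supported on
`e g s`.  `P_{d_i}` is the supremum, over all opponent strategies `opp` (a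
choice of inserted message given the set of observed messages), of the
probability that the inserted message is new and accepted as authentic (i.e.
lies in `⋃ s, e g s` but is none of the observed messages). -/
theorem spoofing_probability_lower_bound
    (S M E : Type) [Fintype S] [Fintype M] [Fintype E]
    [DecidableEq S] [DecidableEq M]
    (c i : ℕ) (hc : 0 < c) (hi : i < Fintype.card S)
    (e : E → S → Finset M)
    (hcard : ∀ g s, (e g s).card = c)
    (hdisj : ∀ g, ∀ s s' : S, s ≠ s' → Disjoint (e g s) (e g s'))
    (pE : E → ℝ) (hpE : ∀ g, 0 ≤ pE g) (hpEsum : ∑ g, pE g = 1)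
    (pS : (Fin i ↪ S) → ℝ) (hpS : ∀ σ, 0 ≤ pS σ) (hpSsum : ∑ σ, pS σ = 1)
    (sp : E → S → M → ℝ) (hsp : ∀ g s m, 0 ≤ sp g s m)
    (hsupp : ∀ g s m, sp g s m ≠ 0 → m ∈ e g s)
    (hspsum : ∀ g s, ∑ m, sp g s m = 1) :
    (c : ℝ) * ((Fintype.card S : ℝ) - i) / ((Fintype.card M : ℝ) - i) ≤
      ⨆ opp : Finset M → M,
        ∑ g : E, ∑ σ : Fin i ↪ S, ∑ τ : Fin i → M,
          if (∀ j, τ j ∈ e g (σ j)) ∧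
              opp (Finset.image τ Finset.univ) ∉ Finset.image τ Finset.univ ∧
              (∃ s, opp (Finset.image τ Finset.univ) ∈ e g s)
          then pE g * pS σ * ∏ j, sp g (σ j) (τ j)
          else 0 := by
  obtain ⟨g₀⟩ : Nonempty E :=
    univ_nonempty_iff.mp (nonempty_of_sum_ne_zero (hpEsum ▸ one_ne_zero))
  have hiM : i < Fintype.card M := calc
    i < Fintype.card S := hi
    _ ≤ c * Fintype.card S := Nat.le_mul_of_pos_left _ hc
    _ = (univ.biUnion (e g₀)).card := (card_biUnion_of_splitting hcard hdisj g₀).symm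
    _ ≤ Fintype.card M := card_le_univ _
  have : Nonempty M := Fintype.card_pos_iff.mp (by omega)
  obtain ⟨opp, hopp⟩ := exists_response_sum_mul_card_le
    (fun ω : E × (Fin i ↪ S) × (Fin i → M) => pE ω.1 * pS ω.2.1 * ∏ j, sp ω.1 (ω.2.1 j) (ω.2.2 j))
    (fun ω => mul_nonneg (mul_nonneg (hpE _) (hpS _)) (prod_nonneg fun j _ => hsp _ _ _))
    (fun ω => univ.image ω.2.2) (fun ω => newAuthentic e ω.1 ω.2.1 ω.2.2)
    (fun T => if T.card = i then Tᶜ else ∅) (Fintype.card M - i)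
    (fun T => by split_ifs with hT <;> simp [card_compl, hT])
    (fun ω => newAuthentic_subset_compl hdisj ω.1 ω.2.1 ω.2.2)
  simp only [Fintype.sum_prod_type, mem_newAuthentic, Nat.cast_sub hiM.le] at hopp
  refine le_trans ?_ (le_ciSup (Set.finite_range _).bddAbove opp)
  rw [div_le_iff₀ (by rw [sub_pos]; exact_mod_cast hiM), mul_comm _ ((Fintype.card M : ℝ) - i)]
  have hi_le : (i : ℝ) ≤ c * i := le_mul_of_one_le_left (Nat.cast_nonneg i) (by exact_mod_cast hc)
  calc (c : ℝ) * ((Fintype.card S : ℝ) - i) ≤ c * Fintype.card S - i := by linarith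
    _ ≤ _ := sub_le_sum_mul_card_newAuthentic hcard hdisj pE hpE hpEsum pS hpS hpSsum sp hsp
          hsupp hspsum
    _ ≤ _ := hopp
end

section
/- If a splitting t-(v, k×c, λ) design exists, then for every s with 0 ≤ s ≤ t, the divisibility condition λ·C(v−s, t−s) ≡ 0 mod c^{t−s}·C(k−s, t−s) holds. -/
/-- A `k × c` block with entries in `X`: each point of `X` occurs at most once
in the array (i.e. the array of entries is injective). -/
def IsBlock {X : Type*} (k c : ℕ) (B : Fin k → Fin c → X) : Prop :=
  Function.Injective fun p : Fin k × Fin c => B p.1 p.2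

/-- The points of `T` occur in pairwise distinct rows of the block `B`. -/
def OccursInDistinctRows {X : Type*} {k c : ℕ} (B : Fin k → Fin c → X)
    (T : Finset X) : Prop :=
  ∃ f : X → Fin k, Set.InjOn f ↑T ∧ ∀ x ∈ T, ∃ j : Fin c, B (f x) j = x

/-- A splitting `t`-`(v, k × c, λ)` design on point set `X`, with blocks indexed by `ι`:
every `t`-subset of points occurs in `t` pairwise distinct rows of exactly `lam` blocks. -/
structure IsSplittingDesign {X ι : Type*} [Fintype X] [Fintype ι]
    (t v k c lam : ℕ) (B : ι → Fin k → Fin c → X) : Prop where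
  card_points : Fintype.card X = v
  block : ∀ i, IsBlock k c (B i)
  balance : ∀ T : Finset X, T.card = t →
    Nat.card {i : ι // OccursInDistinctRows (B i) T} = lam

/-- Existence of a splitting `t`-`(v, k × c, lam)` design. -/
def SplittingDesignExists (t v k c lam : ℕ) : Prop :=
  ∃ (ι : Type) (_ : Fintype ι) (B : ι → Fin k → Fin c → Fin v),
    IsSplittingDesign t v k c lam B



/-!
Fix an `s`-set `S` and let `λ_S` be the number of blocks in which `S` occurs in distinct rows.
A block in which `S` occurs in distinct rows admits exactly `(k - s) c` points `x ∉ S` for which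
`S ∪ {x}` still does, namely the points in the `k - s` rows that `S` avoids. Counting the pairs
`(x, block)` in two ways gives `λ_S (k - s) c = ∑_{x ∉ S} λ_{S ∪ {x}}`, and downward induction
from `λ_T = λ` for `t`-sets yields `λ_S c^(t-s) C(k-s, t-s) = λ C(v-s, t-s)`.
-/

open Finset

theorem Nat.mul_choose_sub_one_eq (n d : ℕ) :
    n * (n - 1).choose d = n.choose (d + 1) * (d + 1) := by
  cases n with
  | zero => simp
  | succ n => exact Nat.add_one_mul_choose_eq n d

section

variable {X : Type*} {k c : ℕ} {b : Fin k → Fin c → X} {S T : Finset X}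

theorem OccursInDistinctRows.mono (h : OccursInDistinctRows b T) (hST : S ⊆ T) :
    OccursInDistinctRows b S := by
  obtain ⟨f, hf, hfT⟩ := h
  exact ⟨f, hf.mono (coe_subset.2 hST), fun x hx => hfT x (hST hx)⟩

theorem IsBlock.row_eq (hb : IsBlock k c b) {r r' : Fin k} {j j' : Fin c}
    (h : b r j = b r' j') : r = r' :=
  congrArg Prod.fst (@hb (r, j) (r', j') h)

theorem IsBlock.notMem_and_occursInDistinctRows_insert_iff [DecidableEq X]
    (hb : IsBlock k c b) {f : X → Fin k} (hf : Set.InjOn f S)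
    (hfS : ∀ y ∈ S, ∃ j, b (f y) j = y) {x : X} :
    (x ∉ S ∧ OccursInDistinctRows b (insert x S)) ↔ ∃ r ∉ S.image f, ∃ j, b r j = x := by
  constructor
  · rintro ⟨hx, g, hg, hgx⟩
    obtain ⟨j, hj⟩ := hgx x (mem_insert_self x S)
    refine ⟨g x, fun hr => ?_, j, hj⟩
    obtain ⟨y, hy, hfy⟩ := mem_image.1 hr
    obtain ⟨j₁, hj₁⟩ := hgx y (mem_insert_of_mem hy)
    obtain ⟨j₂, hj₂⟩ := hfS y hy
    have hgy : g y = g x := (hb.row_eq (hj₁.trans hj₂.symm)).trans hfy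
    exact hx (hg (by simp [hy]) (by simp) hgy ▸ hy)
  · rintro ⟨r, hr, j, rfl⟩
    have hx : b r j ∉ S := fun hx => by
      obtain ⟨j', hj'⟩ := hfS _ hx
      exact hr (mem_image.2 ⟨_, hx, hb.row_eq hj'⟩)
    have hupd : Set.EqOn (Function.update f (b r j) r) f S := fun y hy =>
      Function.update_of_ne (ne_of_mem_of_not_mem hy hx) _ _
    refine ⟨hx, Function.update f (b r j) r, ?_, ?_⟩
    · rw [coe_insert, Set.injOn_insert (mem_coe.not.2 hx), hupd.injOn_iff, hupd.image_eq]
      refine ⟨hf, ?_⟩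
      simpa [← coe_image] using hr
    · intro y hy
      rcases mem_insert.1 hy with rfl | hy
      · exact ⟨j, by simp⟩
      · simpa [hupd hy] using hfS y hy

open scoped Classical in
theorem IsBlock.card_filter_occursInDistinctRows_insert [Fintype X] [DecidableEq X]
    (hb : IsBlock k c b) (S : Finset X) :
    #{x ∈ Sᶜ | OccursInDistinctRows b (insert x S)} =
      if OccursInDistinctRows b S then (k - #S) * c else 0 := by
  split_ifs with hS
  · obtain ⟨f, hf, hfS⟩ := hS
    have hext : {x ∈ Sᶜ | OccursInDistinctRows b (insert x S)} =
        ((S.image f)ᶜ ×ˢ univ).image fun p : Fin k × Fin c => b p.1 p.2 := by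
      ext x
      simpa [and_comm] using hb.notMem_and_occursInDistinctRows_insert_iff hf hfS
    rw [hext, card_image_of_injective _ hb, card_product, card_compl, card_image_of_injOn hf]
    simp
  · rw [card_eq_zero, filter_eq_empty_iff]
    exact fun x _ hx => hS (hx.mono (subset_insert x S))

end

noncomputable def occurrenceCount {X ι : Type*} {k c : ℕ} (B : ι → Fin k → Fin c → X)
    (T : Finset X) : ℕ :=
  Nat.card {i : ι // OccursInDistinctRows (B i) T}

section

variable {X ι : Type*} [Fintype X] [DecidableEq X] [Fintype ι] {k c : ℕ}
  {B : ι → Fin k → Fin c → X}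

theorem sum_occurrenceCount_insert (hB : ∀ i, IsBlock k c (B i)) (S : Finset X) :
    ∑ x ∈ Sᶜ, occurrenceCount B (insert x S) = occurrenceCount B S * ((k - #S) * c) := by
  classical
  simp only [occurrenceCount, Nat.card_eq_fintype_card, Fintype.card_subtype]
  calc ∑ x ∈ Sᶜ, #{i | OccursInDistinctRows (B i) (insert x S)}
      = ∑ i, #{x ∈ Sᶜ | OccursInDistinctRows (B i) (insert x S)} :=
        sum_card_bipartiteAbove_eq_sum_card_bipartiteBelow _
    _ = ∑ i, if OccursInDistinctRows (B i) S then (k - #S) * c else 0 :=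
        sum_congr rfl fun i _ => (hB i).card_filter_occursInDistinctRows_insert S
    _ = #{i | OccursInDistinctRows (B i) S} * ((k - #S) * c) := by
        rw [sum_ite, sum_const_zero, add_zero, sum_const, smul_eq_mul]

/-- With `d = t - #S`: the count depends only on `#S`, so a splitting `t`-design is also a
splitting `s`-design for every `s ≤ t`. -/
theorem IsSplittingDesign.occurrenceCount_mul_eq {t v lam : ℕ}
    (hd : IsSplittingDesign t v k c lam B) (d : ℕ) (S : Finset X) (hS : #S + d = t) :
    occurrenceCount B S * (c ^ d * (k - #S).choose d) = lam * (v - #S).choose d := by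
  induction d generalizing S with
  | zero =>
    simp only [pow_zero, Nat.choose_zero_right, mul_one]
    exact hd.balance S hS
  | succ d ih =>
    have hins : ∀ x ∈ Sᶜ, occurrenceCount B (insert x S) * (c ^ d * (k - #S - 1).choose d) =
        lam * (v - #S - 1).choose d := by
      intro x hx
      have hcard : #(insert x S) = #S + 1 := card_insert_of_notMem (mem_compl.1 hx)
      simpa only [hcard, Nat.sub_sub] using ih (insert x S) (by omega)
    apply Nat.eq_of_mul_eq_mul_right d.succ_pos
    calc occurrenceCount B S * (c ^ (d + 1) * (k - #S).choose (d + 1)) * (d + 1)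
        = occurrenceCount B S * ((k - #S) * c) * (c ^ d * (k - #S - 1).choose d) := by
          rw [mul_assoc, mul_assoc, ← (k - #S).mul_choose_sub_one_eq d, pow_succ]; ring
      _ = ∑ x ∈ Sᶜ, lam * (v - #S - 1).choose d := by
          rw [← sum_occurrenceCount_insert hd.block, sum_mul]; exact sum_congr rfl hins
      _ = lam * (v - #S).choose (d + 1) * (d + 1) := by
          rw [sum_const, card_compl, hd.card_points, smul_eq_mul, mul_assoc,
            ← (v - #S).mul_choose_sub_one_eq d]; ring

end

theorem splitting_design_necessary_divisibility_general
    (t v k c lam : ℕ)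
    (h : SplittingDesignExists t v k c lam) :
    ∀ s ≤ t, c ^ (t - s) * Nat.choose (k - s) (t - s) ∣ lam * Nat.choose (v - s) (t - s) := by
  obtain ⟨ι, _, B, hd⟩ := h
  intro s hst
  rcases le_or_gt s v with hsv | hvs
  · obtain ⟨S, -, hS⟩ := exists_subset_card_eq (s := (univ : Finset (Fin v))) (n := s)
      (by simpa using hsv)
    have hcount := hd.occurrenceCount_mul_eq (t - s) S (by omega)
    rw [hS] at hcount
    exact Dvd.intro_left _ hcount
  -- No `s`-set exists, but `v - s` truncates to `0`, so the right side vanishes unless `s = t`.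
  · rcases hst.eq_or_lt with rfl | hst
    · simp
    · rw [Nat.sub_eq_zero_of_le hvs.le, Nat.choose_eq_zero_of_lt (n := 0) (by omega), mul_zero]
      exact dvd_zero _

/-- Necessary divisibility conditions for the existence of a splitting
`t`-`(v, k × c, λ)` design: for every `0 ≤ s ≤ t`,
`λ * C(v-s, t-s) ≡ 0 (mod c^(t-s) * C(k-s, t-s))`. -/
theorem splitting_design_necessary_divisibility
    (t v k c lam : ℕ) (ht : 0 < t) (hv : 0 < v) (hc : 0 < c) (hlam : 0 < lam)
    (htk : t ≤ k) (hckv : c * k ≤ v)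
    (h : SplittingDesignExists t v k c lam) :
    ∀ s ≤ t, c ^ (t - s) * Nat.choose (k - s) (t - s) ∣ lam * Nat.choose (v - s) (t - s) :=
  splitting_design_necessary_divisibility_general t v k c lam h
end

section
/- For all integers k, c ≥ 2, there does not exist a splitting 2-((k−1)c²+1, k×c, 1) design. -/
/-! The rows of a block span a complete `k`-partite graph on the points, and the blocks of a
splitting `2`-`(v, k × c, 1)` design partition the edges of `K_v` into `b` such graphs; counting
edges gives `b k = v`. Huang's bound `v ≤ b (k - 1) + 1` follows from the Graham–Pollak argument:
otherwise some nonzero `x : V → ℚ` has total sum `0` and, in every graph, equal sums `s_i` over all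
parts; then `∑ᵢ ∑_{a ≠ b} s_i² = (∑ x)² - ∑ x² < 0`. Together the two give `v ≤ k`, which is
absurd for `v = (k - 1) c² + 1`. -/

open Finset Function

theorem Finset.sum_offDiag_mul {V R : Type*} [DecidableEq V] [CommRing R] (s : Finset V)
    (x : V → R) : ∑ e ∈ s.offDiag, x e.1 * x e.2 = (∑ p ∈ s, x p) ^ 2 - ∑ p ∈ s, x p ^ 2 := by
  rw [eq_sub_iff_add_eq, sq, sum_mul_sum, ← sum_product', ← diag_union_offDiag,
    sum_union (disjoint_diag_offDiag _), sum_diag, add_comm]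
  simp [sq]

theorem exists_ne_zero_forall_dotProduct_eq_zero {m n K : Type*} [Fintype m] [Fintype n]
    [Field K] (w : m → n → K) (hcard : Fintype.card m < Fintype.card n) :
    ∃ x ≠ 0, ∀ t, w t ⬝ᵥ x = 0 := by
  have hker : LinearMap.ker (Matrix.of w).mulVecLin ≠ ⊥ :=
    LinearMap.ker_ne_bot_of_finrank_lt (by simpa using hcard)
  obtain ⟨x, hx, hx0⟩ := (Submodule.ne_bot_iff _).mp hker
  exact ⟨x, hx0, fun t => congrFun (LinearMap.mem_ker.mp hx) t⟩

section Multipartite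

variable {V κ ι : Type*} [DecidableEq V] [Fintype κ]

def multipartiteEdges (P : κ → Finset V) : Finset (V × V) :=
  univ.offDiag.biUnion fun ab => P ab.1 ×ˢ P ab.2

theorem mem_multipartiteEdges {P : κ → Finset V} {e : V × V} :
    e ∈ multipartiteEdges P ↔ ∃ a b, a ≠ b ∧ e.1 ∈ P a ∧ e.2 ∈ P b := by
  simp [multipartiteEdges]

theorem sum_multipartiteEdges {M : Type*} [AddCommMonoid M] {P : κ → Finset V}
    (hP : Pairwise (Disjoint on P)) (f : V × V → M) :
    ∑ e ∈ multipartiteEdges P, f e = ∑ ab ∈ univ.offDiag, ∑ e ∈ P ab.1 ×ˢ P ab.2, f e := by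
  refine sum_biUnion fun ab _ ab' _ hne => disjoint_product.mpr ?_
  by_cases h : ab.1 = ab'.1
  · exact Or.inr (hP fun h' => hne (Prod.ext h h'))
  · exact Or.inl (hP h)

structure IsMultipartiteDecomposition (P : ι → κ → Finset V) : Prop where
  pairwise_disjoint : ∀ i, Pairwise (Disjoint on P i)
  existsUnique_mem : ∀ p q, p ≠ q → ∃! i, (p, q) ∈ multipartiteEdges (P i)

namespace IsMultipartiteDecomposition

variable {P : ι → κ → Finset V}

theorem fst_ne_snd_of_mem (h : IsMultipartiteDecomposition P) {i : ι} {e : V × V}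
    (he : e ∈ multipartiteEdges (P i)) : e.1 ≠ e.2 := by
  obtain ⟨a, b, hab, ha, hb⟩ := mem_multipartiteEdges.mp he
  exact fun heq => disjoint_left.mp (h.pairwise_disjoint i hab) ha (heq ▸ hb)

variable [Fintype V] [Fintype ι]

theorem sum_sum_multipartiteEdges {M : Type*} [AddCommMonoid M]
    (h : IsMultipartiteDecomposition P) (f : V × V → M) :
    ∑ i, ∑ e ∈ multipartiteEdges (P i), f e = ∑ e ∈ univ.offDiag, f e := by
  have hdisj : ((univ : Finset ι) : Set ι).PairwiseDisjoint fun i => multipartiteEdges (P i) := by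
    intro i _ j _ hij
    refine disjoint_left.mpr fun e hi hj => hij ?_
    exact (h.existsUnique_mem e.1 e.2 (h.fst_ne_snd_of_mem hi)).unique hi hj
  have hcover : univ.biUnion (fun i => multipartiteEdges (P i)) = univ.offDiag := by
    ext e
    simp only [mem_biUnion, mem_univ, true_and, mem_offDiag]
    exact ⟨fun ⟨i, hi⟩ => h.fst_ne_snd_of_mem hi,
      fun hne => (h.existsUnique_mem e.1 e.2 hne).exists⟩
  rw [← sum_biUnion hdisj, hcover]

theorem sum_sum_offDiag_mul {R : Type*} [CommRing R] (h : IsMultipartiteDecomposition P)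
    (x : V → R) :
    ∑ i, ∑ ab ∈ univ.offDiag, (∑ p ∈ P i ab.1, x p) * (∑ q ∈ P i ab.2, x q) =
      (∑ p, x p) ^ 2 - ∑ p, x p ^ 2 := by
  rw [← sum_offDiag_mul, ← h.sum_sum_multipartiteEdges]
  refine sum_congr rfl fun i _ => ?_
  rw [sum_multipartiteEdges (h.pairwise_disjoint i)]
  simp_rw [sum_product, sum_mul_sum]

theorem eq_zero_of_sum_parts_eq {R : Type*} [CommRing R] [LinearOrder R] [IsStrictOrderedRing R]
    (h : IsMultipartiteDecomposition P) {x : V → R}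
    (hparts : ∀ i a b, ∑ p ∈ P i a, x p = ∑ p ∈ P i b, x p) (hsum : ∑ p, x p = 0) : x = 0 := by
  have hnonneg : 0 ≤ ∑ i, ∑ ab ∈ univ.offDiag, (∑ p ∈ P i ab.1, x p) * (∑ q ∈ P i ab.2, x q) :=
    sum_nonneg fun i _ => sum_nonneg fun ab _ => hparts i ab.2 ab.1 ▸ mul_self_nonneg _
  rw [h.sum_sum_offDiag_mul, hsum] at hnonneg
  have hsq : ∑ p, x p ^ 2 = 0 := le_antisymm (by linarith) (sum_nonneg fun p _ => sq_nonneg _)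
  funext p
  simpa using (sum_eq_zero_iff_of_nonneg fun p _ => sq_nonneg (x p)).mp hsq p (mem_univ p)

theorem card_le_card_mul_add_one (h : IsMultipartiteDecomposition P) :
    Fintype.card V ≤ Fintype.card ι * (Fintype.card κ - 1) + 1 := by
  rcases isEmpty_or_nonempty κ with hκ | ⟨⟨a₀⟩⟩
  · refine (Fintype.card_le_one_iff.mpr fun p q => by_contra fun hpq => ?_).trans le_add_self
    obtain ⟨i, hi, -⟩ := h.existsUnique_mem p q hpq
    obtain ⟨a, -⟩ := mem_multipartiteEdges.mp hi
    exact hκ.elim a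
  by_contra! hlt
  classical
  -- one equation `∑_{P i a} x = ∑_{P i a₀} x` per graph `i` and part `a ≠ a₀`, and `∑ x = 0`
  let w : (ι × {a // a ≠ a₀}) ⊕ Unit → V → ℚ :=
    Sum.elim (fun ia p => (if p ∈ P ia.1 ia.2 then 1 else 0) - if p ∈ P ia.1 a₀ then 1 else 0)
      fun _ _ => 1
  obtain ⟨x, hx0, hx⟩ := exists_ne_zero_forall_dotProduct_eq_zero w <| by
    simpa [Fintype.card_subtype_compl] using hlt
  have hparts₀ : ∀ i a, ∑ p ∈ P i a, x p = ∑ p ∈ P i a₀, x p := by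
    intro i a
    by_cases ha : a = a₀
    · rw [ha]
    · simpa [w, dotProduct, sub_mul, sum_sub_distrib, ite_mul, sub_eq_zero] using
        hx (.inl (i, ⟨a, ha⟩))
  refine hx0 (h.eq_zero_of_sum_parts_eq (fun i a b => (hparts₀ i a).trans (hparts₀ i b).symm) ?_)
  simpa [w, dotProduct] using hx (.inr ())

end IsMultipartiteDecomposition

end Multipartite

section SplittingDesign

variable {X : Type*} [DecidableEq X] {k c : ℕ}

def blockRows (B : Fin k → Fin c → X) (a : Fin k) : Finset X :=
  univ.image (B a)

theorem occursInDistinctRows_pair_iff {B : Fin k → Fin c → X} {p q : X} (hpq : p ≠ q) :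
    OccursInDistinctRows B {p, q} ↔ (p, q) ∈ multipartiteEdges (blockRows B) := by
  simp only [mem_multipartiteEdges, blockRows, mem_image, mem_univ, true_and]
  constructor
  · rintro ⟨f, hf, hrow⟩
    exact ⟨f p, f q, hf.ne (by simp) (by simp) hpq, hrow p (by simp), hrow q (by simp)⟩
  · rintro ⟨a, b, hab, hp, hq⟩
    refine ⟨fun z => if z = p then a else b, ?_, ?_⟩
    · intro z hz w hw
      simp only [coe_insert, coe_singleton, Set.mem_insert_iff, Set.mem_singleton_iff] at hz hw
      rcases hz with rfl | rfl <;> rcases hw with rfl | rfl <;> simp [hab, hab.symm, hpq.symm]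
    · intro z hz
      rw [mem_insert, mem_singleton] at hz
      rcases hz with rfl | rfl <;> simp [hp, hq, hpq.symm]

namespace IsBlock

variable {B : Fin k → Fin c → X}

theorem pairwise_disjoint_blockRows (hB : IsBlock k c B) : Pairwise (Disjoint on blockRows B) := by
  intro a b hab
  simp only [onFun, blockRows, disjoint_left, mem_image, mem_univ, true_and]
  rintro _ ⟨j, rfl⟩ ⟨j', hj'⟩
  exact hab (congrArg Prod.fst (hB (a₁ := (b, j')) (a₂ := (a, j)) hj')).symm

theorem card_blockRows (hB : IsBlock k c B) (a : Fin k) : #(blockRows B a) = c := by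
  have hinj : Injective (B a) := fun j j' hj =>
    congrArg Prod.snd (hB (a₁ := (a, j)) (a₂ := (a, j')) hj)
  rw [blockRows, card_image_of_injective _ hinj, card_univ, Fintype.card_fin]

end IsBlock

namespace IsSplittingDesign

variable [Fintype X] {ι : Type*} [Fintype ι] {v : ℕ} {B : ι → Fin k → Fin c → X}

theorem isMultipartiteDecomposition (hB : IsSplittingDesign 2 v k c 1 B) :
    IsMultipartiteDecomposition fun i => blockRows (B i) where
  pairwise_disjoint i := (hB.block i).pairwise_disjoint_blockRows
  existsUnique_mem p q hpq := by
    classical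
    simp_rw [← occursInDistinctRows_pair_iff hpq]
    rw [Fintype.existsUnique_iff_card_one, ← Fintype.card_subtype, ← Nat.card_eq_fintype_card]
    exact hB.balance _ (card_pair hpq)

theorem card_mul_eq (hB : IsSplittingDesign 2 v k c 1 B) :
    Fintype.card ι * (k * (k - 1) * c ^ 2) = v * (v - 1) := by
  have hedges : ∀ i, #(multipartiteEdges (blockRows (B i))) = k * (k - 1) * c ^ 2 := by
    intro i
    rw [card_eq_sum_ones, sum_multipartiteEdges (hB.block i).pairwise_disjoint_blockRows]
    simp [(hB.block i).card_blockRows, offDiag_card, Nat.mul_sub_one, sq]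
  have hcount := hB.isMultipartiteDecomposition.sum_sum_multipartiteEdges fun _ => 1
  simp only [hedges, sum_const, card_univ, smul_eq_mul, mul_one, offDiag_card,
    hB.card_points] at hcount
  rw [hcount, Nat.mul_sub_one]

end IsSplittingDesign

end SplittingDesign

/-- For all `k, c ≥ 2`, there is no splitting `2`-`((k-1)c² + 1, k × c, 1)` design. -/
theorem no_splitting_design_kminus1_csq_plus_one
    (k c : ℕ) (hk : 2 ≤ k) (hc : 2 ≤ c) :
    ¬ SplittingDesignExists 2 ((k - 1) * c ^ 2 + 1) k c 1 := by
  rintro ⟨ι, _, B, hB⟩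
  obtain ⟨m, rfl⟩ : ∃ m, k = m + 1 := ⟨k - 1, by omega⟩
  have hcount := hB.card_mul_eq
  have hhuang := hB.isMultipartiteDecomposition.card_le_card_mul_add_one
  rw [hB.card_points, Fintype.card_fin] at hhuang
  simp only [Nat.add_sub_cancel] at hcount hhuang
  set b := Fintype.card ι
  have hbk : b * (m + 1) = m * c ^ 2 + 1 :=
    Nat.eq_of_mul_eq_mul_right (Nat.mul_pos (by omega : 0 < m) (by positivity : 0 < c ^ 2))
      (by rw [← hcount]; ring)
  have hle : (m + 1) * (m * c ^ 2) ≤ m * (m * c ^ 2 + 1) := by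
    calc (m + 1) * (m * c ^ 2) ≤ (m + 1) * (b * m) := Nat.mul_le_mul_left _ (by omega)
      _ = m * (m * c ^ 2 + 1) := by rw [← hbk]; ring
  nlinarith [Nat.mul_le_mul_left m (show 4 ≤ c ^ 2 by nlinarith)]
end

section
/- The set A generated under the additive action of Z_151 by the single 3×5 base block with rows (0,1,2,3,4), (5,13,59,105,118), (28,67,73,112,134) forms a splitting 2-(151, 3×5, 1) design on Z_151: every pair of distinct elements of Z_151 occurs in two distinct rows of exactly one translate of the base block. -/
/-- The `3 × 5` base block over `ℤ/151ℤ` with rows `(0,1,2,3,4)`,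
`(5,13,59,105,118)`, `(28,67,73,112,134)`. -/
def baseBlock151 : Fin 3 → Fin 5 → ZMod 151 :=
  ![![0, 1, 2, 3, 4], ![5, 13, 59, 105, 118], ![28, 67, 73, 112, 134]]

/-!
The `150 = 3 · 2 · 5²` differences `b - b'` of entries `b, b'` lying in different rows of the base
block hit every nonzero residue mod 151 (a finite computation), hence each exactly once by counting.
So for `x ≠ y` there is a unique cross-row pair `(b, b')` with `b - b' = x - y`, and the translate
`B + g` holds `x` and `y` in distinct rows exactly when `g = x - b`.
-/

open Finset

section TranslateDesign

variable {G : Type*} [AddCommGroup G] {k c : ℕ}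

def cellDiff (B : Fin k → Fin c → G) (q : (Fin k × Fin c) × (Fin k × Fin c)) : G :=
  B q.1.1 q.1.2 - B q.2.1 q.2.2

def crossRowPairs (k c : ℕ) : Finset ((Fin k × Fin c) × (Fin k × Fin c)) :=
  {q | q.1.1 ≠ q.2.1}

theorem IsBlock.translate {B : Fin k → Fin c → G} (hB : IsBlock k c B) (g : G) :
    IsBlock k c fun r j => B r j + g :=
  fun _ _ h => hB (add_right_cancel h)

theorem occursInDistinctRows_pair_iff_s7 {X : Type*} [DecidableEq X] {B : Fin k → Fin c → X}
    {x y : X} (hxy : x ≠ y) :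
    OccursInDistinctRows B {x, y} ↔
      ∃ q ∈ crossRowPairs k c, B q.1.1 q.1.2 = x ∧ B q.2.1 q.2.2 = y := by
  constructor
  · rintro ⟨f, hf, hcov⟩
    obtain ⟨jx, hjx⟩ := hcov x (by simp)
    obtain ⟨jy, hjy⟩ := hcov y (by simp)
    have hrow : f x ≠ f y := fun h => hxy (hf (by simp) (by simp) h)
    exact ⟨((f x, jx), (f y, jy)), by simpa [crossRowPairs] using hrow, hjx, hjy⟩
  · rintro ⟨⟨⟨r, j⟩, ⟨r', j'⟩⟩, hq, hx, hy⟩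
    refine ⟨fun z => if z = x then r else r', ?_, ?_⟩
    · have hr : r ≠ r' := by simpa [crossRowPairs] using hq
      intro a ha b hb hab
      simp only [coe_insert, coe_singleton, Set.mem_insert_iff, Set.mem_singleton_iff] at ha hb
      rcases ha with rfl | rfl <;> rcases hb with rfl | rfl <;> simp_all [eq_comm]
    · intro z hz
      rcases mem_insert.mp hz with rfl | hz
      · exact ⟨j, by simpa using hx⟩
      · rw [mem_singleton.mp hz]
        exact ⟨j', by simpa [hxy.symm] using hy⟩

theorem IsBlock.bijOn_cellDiff_of_surjOn [Fintype G] [DecidableEq G] {B : Fin k → Fin c → G}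
    (hB : IsBlock k c B) (hcard : #(crossRowPairs k c) < Fintype.card G)
    (hsurj : Set.SurjOn (cellDiff B) (crossRowPairs k c) {0}ᶜ) :
    Set.BijOn (cellDiff B) (crossRowPairs k c) {0}ᶜ := by
  have hmaps : Set.MapsTo (cellDiff B) (crossRowPairs k c) {0}ᶜ := by
    intro q hq hzero
    have hrow : q.1.1 ≠ q.2.1 := by simpa [crossRowPairs] using hq
    exact hrow (congrArg Prod.fst (hB (sub_eq_zero.mp hzero)))
  refine ⟨hmaps, ?_, hsurj⟩
  have hcoe : (({0}ᶜ : Finset G) : Set G) = {0}ᶜ := by simp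
  refine injOn_of_surjOn_of_card_le (t := {0}ᶜ) _ (hcoe ▸ hmaps) (hcoe ▸ hsurj) ?_
  rw [card_compl, card_singleton]
  omega

theorem translate_occursInDistinctRows_pair_iff [DecidableEq G] {B : Fin k → Fin c → G}
    (hdiff : Set.InjOn (cellDiff B) (crossRowPairs k c)) {x y : G} (hxy : x ≠ y)
    {q₀ : (Fin k × Fin c) × (Fin k × Fin c)} (hq₀ : q₀ ∈ crossRowPairs k c)
    (hq₀d : cellDiff B q₀ = x - y) (g : G) :
    OccursInDistinctRows (fun r j => B r j + g) {x, y} ↔ g = x - B q₀.1.1 q₀.1.2 := by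
  rw [occursInDistinctRows_pair_iff_s7 hxy]
  constructor
  · rintro ⟨q, hq, hx, hy⟩
    have hqd : cellDiff B q = x - y := by rw [cellDiff, ← hx, ← hy]; abel
    rw [← hdiff hq hq₀ (hqd.trans hq₀d.symm), ← hx]
    abel
  · rintro rfl
    refine ⟨q₀, hq₀, by abel, ?_⟩
    rw [cellDiff] at hq₀d
    linear_combination (norm := abel) -hq₀d

theorem isSplittingDesign_translates [Fintype G] [DecidableEq G] {B : Fin k → Fin c → G}
    (hB : IsBlock k c B) (hdiff : Set.BijOn (cellDiff B) (crossRowPairs k c) {0}ᶜ) :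
    IsSplittingDesign 2 (Fintype.card G) k c 1 fun g r j => B r j + g := by
  refine ⟨rfl, hB.translate, fun T hT => ?_⟩
  obtain ⟨x, y, hxy, rfl⟩ := card_eq_two.mp hT
  obtain ⟨q₀, hq₀, hq₀d⟩ := hdiff.surjOn (sub_ne_zero.mpr hxy)
  simp_rw [translate_occursInDistinctRows_pair_iff hdiff.injOn hxy hq₀ hq₀d]
  exact Nat.card_unique

end TranslateDesign

theorem baseBlock151_isBlock : IsBlock 3 5 baseBlock151 := by
  unfold IsBlock
  decide

theorem baseBlock151_surjOn_cellDiff :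
    Set.SurjOn (cellDiff baseBlock151) (crossRowPairs 3 5) {0}ᶜ := by
  have h : ∀ d : ZMod 151, d ≠ 0 → ∃ q ∈ crossRowPairs 3 5, cellDiff baseBlock151 q = d := by
    decide +kernel
  exact h

/-- The 151 translates of the base block under the additive action of `ℤ/151ℤ`
form a splitting `2`-`(151, 3 × 5, 1)` design on `ℤ/151ℤ`. -/
theorem baseBlock151_generates_splitting_design :
    IsSplittingDesign 2 151 3 5 1
      (fun g : ZMod 151 => fun r j => baseBlock151 r j + g) := by
  have hcard : #(crossRowPairs 3 5) < Fintype.card (ZMod 151) := by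
    rw [ZMod.card]
    decide +kernel
  have h := isSplittingDesign_translates baseBlock151_isBlock
    (baseBlock151_isBlock.bijOn_cellDiff_of_surjOn hcard baseBlock151_surjOn_cellDiff)
  rwa [ZMod.card] at h
end

section
/- (Fundamental Construction for splitting GDDs) Let (X, G, A) be a GDD(t, k, v). Suppose for each block A ∈ A there is a splitting GDD(t, k'×c, kc) of type c^k on point set A×{1,...,c} with groups {x}×{1,...,c}, x ∈ A. Then (X×{1,...,c}, {G×{1,...,c}: G ∈ G}, ∪_{A} B_A) is a splitting GDD(t, k'×c, vc) of type [c|G| : G ∈ G]. -/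
/-- A group divisible design GDD`(t, k, v)`: groups are the fibers of `grp`,
blocks are `k`-subsets meeting each group in at most one point, and every
`t`-subset with at most one point per group lies in exactly one block. -/
structure IsGDD {X Γ ι : Type*} [Fintype X] [Fintype ι]
    (t k : ℕ) (grp : X → Γ) (Blk : ι → Finset X) : Prop where
  block_card : ∀ i, (Blk i).card = k
  block_transversal : ∀ i, Set.InjOn grp ↑(Blk i)
  balance : ∀ T : Finset X, T.card = t → Set.InjOn grp ↑T →
    Nat.card {i : ι // T ⊆ Blk i} = 1

/-- A splitting GDD`(t, k × c, v)`: groups are the fibers of `grp`, blocks are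
`k × c` arrays (each point at most once per array), and every `t`-subset with at
most one point per group occurs in `t` distinct rows of exactly one block. -/
structure IsSplittingGDD {X Γ ι : Type*} [Fintype X] [Fintype ι]
    (t k c : ℕ) (grp : X → Γ) (B : ι → Fin k → Fin c → X) : Prop where
  block : ∀ i, IsBlock k c (B i)
  balance : ∀ T : Finset X, T.card = t → Set.InjOn grp ↑T →
    Nat.card {i : ι // OccursInDistinctRows (B i) T} = 1


/-!
A `t`-subset `T` of `X × Fin c` that is transversal to the groups `G × Fin c` projects onto a
`t`-subset of `X` transversal to the groups `G`, which lies in exactly one block `A` of the GDD.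
An ingredient block on `A' × Fin c` containing `T` forces the projection into `A'`, so
`A' = A`, and the ingredient splitting GDD on `A × Fin c` supplies exactly one such block.
-/

open Finset

theorem Nat.card_subtype_eq_one_iff {α : Type*} (p : α → Prop) :
    Nat.card {a // p a} = 1 ↔ ∃! a, p a := by
  rw [Nat.card_eq_one_iff_unique, ← unique_iff_subsingleton_and_nonempty,
    unique_subtype_iff_existsUnique]

theorem existsUnique_sigma {ι : Type*} {κ : ι → Type*} {P : ι → Prop} {Q : ∀ i, κ i → Prop}
    (hQP : ∀ i j, Q i j → P i) (hP : ∃! i, P i) (hQ : ∀ i, P i → ∃! j, Q i j) :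
    ∃! q : Σ i, κ i, Q q.1 q.2 := by
  obtain ⟨i, hi, hi_unique⟩ := hP
  obtain ⟨j, hj, hj_unique⟩ := hQ i hi
  refine ⟨⟨i, j⟩, hj, ?_⟩
  rintro ⟨i', j'⟩ hq
  obtain rfl := hi_unique i' (hQP i' j' hq)
  rw [hj_unique j' hq]

theorem OccursInDistinctRows.image_subset {X Y : Type*} [DecidableEq Y] {k c : ℕ}
    {B : Fin k → Fin c → X} {T : Finset X} (h : OccursInDistinctRows B T) {f : X → Y}
    {S : Finset Y} (hB : ∀ r s, f (B r s) ∈ S) : T.image f ⊆ S := by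
  obtain ⟨row, -, hrow⟩ := h
  intro y hy
  obtain ⟨x, hx, rfl⟩ := mem_image.1 hy
  obtain ⟨s, hs⟩ := hrow x hx
  exact hs ▸ hB (row x) s

theorem splitting_gdd_fundamental_construction_general
    {X Γ ι : Type*} [Fintype X] [Fintype ι]
    (t k k' c : ℕ)
    (grp : X → Γ) (Blk : ι → Finset X)
    (hGDD : IsGDD t k grp Blk)
    (κ : ι → Type) [∀ i, Fintype (κ i)]
    (B : ∀ i, κ i → Fin k' → Fin c → X × Fin c)
    (hentries : ∀ i j r s, (B i j r s).1 ∈ Blk i)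
    (hblock : ∀ i j, IsBlock k' c (B i j))
    (hbalance : ∀ i, ∀ T : Finset (X × Fin c), T.card = t →
      (∀ x ∈ T, x.1 ∈ Blk i) → Set.InjOn (fun p : X × Fin c => p.1) ↑T →
      Nat.card {j : κ i // OccursInDistinctRows (B i j) T} = 1) :
    IsSplittingGDD t k' c (fun p : X × Fin c => grp p.1)
      (fun q : Σ i : ι, κ i => B q.1 q.2) := by
  classical
  refine ⟨fun q => hblock q.1 q.2, fun T hT hinj => ?_⟩
  have hfst : Set.InjOn Prod.fst (T : Set (X × Fin c)) := Set.InjOn.of_comp (g := grp) hinj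
  have hcard : (T.image Prod.fst).card = t := by rw [card_image_of_injOn hfst, hT]
  have hgrp : Set.InjOn grp ↑(T.image Prod.fst) := by
    rw [coe_image]
    exact hinj.image_of_comp
  have hblock_unique : ∃! i, T.image Prod.fst ⊆ Blk i :=
    (Nat.card_subtype_eq_one_iff _).1 (hGDD.balance _ hcard hgrp)
  rw [Nat.card_subtype_eq_one_iff]
  refine existsUnique_sigma (Q := fun i j => OccursInDistinctRows (B i j) T)
    (fun i j h => h.image_subset (hentries i j)) hblock_unique fun i hi => ?_
  exact (Nat.card_subtype_eq_one_iff _).1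
    (hbalance i T hT (fun x hx => hi (mem_image_of_mem _ hx)) hfst)

/-- Fundamental Construction for splitting GDDs. Let `(X, grp, Blk)` be a
GDD`(t, k, v)`. Suppose that for each block `Blk i` there is a splitting
GDD`(t, k' × c, k c)` of type `c^k` on the point set `Blk i × Fin c`, with
groups `{x} × Fin c` for `x ∈ Blk i` (blocks `B i j`, `j : κ i`). Then the union
of all these blocks is a splitting GDD`(t, k' × c, v c)` on `X × Fin c` with
groups `G × Fin c`, i.e. of type `[c |G| : G ∈ 𝒢]`. -/
theorem splitting_gdd_fundamental_construction
    {X Γ ι : Type*} [Fintype X] [Fintype ι]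
    (t k k' c : ℕ) (hc : 0 < c)
    (grp : X → Γ) (Blk : ι → Finset X)
    (hGDD : IsGDD t k grp Blk)
    (κ : ι → Type) [∀ i, Fintype (κ i)]
    (B : ∀ i, κ i → Fin k' → Fin c → X × Fin c)
    (hentries : ∀ i j r s, (B i j r s).1 ∈ Blk i)
    (hblock : ∀ i j, IsBlock k' c (B i j))
    (hbalance : ∀ i, ∀ T : Finset (X × Fin c), T.card = t →
      (∀ x ∈ T, x.1 ∈ Blk i) → Set.InjOn (fun p : X × Fin c => p.1) ↑T →
      Nat.card {j : κ i // OccursInDistinctRows (B i j) T} = 1) :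
    IsSplittingGDD t k' c (fun p : X × Fin c => grp p.1)
      (fun q : Σ i : ι, κ i => B q.1 q.2) :=
  splitting_gdd_fundamental_construction_general t k k' c grp Blk hGDD κ B hentries hblock hbalance
end
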